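/- arXiv:math/0003095 — 3 statements merged into one kernel-verified Lean document; each statement's English description precedes it below -/
import Mathlib

section
/- Let E and F be Banach lattices with E an ideal in F and the inclusion E ↪ F continuous. For every φ in the dual Banach lattice F*, the restriction of the absolute value |φ| to E equals the absolute value (computed in E*) of the restriction of φ to E, i.e. |φ|∣_E = |φ∣_E|. -/
/-!
Because `E` is an ideal of `F`, every `y ∈ F` with `|y| ≤ x ∈ E₊` already lies in `E`; because
the inclusion is an injective lattice homomorphism, `|y| ≤ x` means the same in `E` and in `F`.
So the two suprema defining `|φ|(x)` and `|φ∣_E|(x)` are taken over the same set of values.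
-/

theorem map_le_map_iff_of_injective_of_map_sup {α β : Type*} [SemilatticeSup α]
    [SemilatticeSup β] {f : α → β} (hf : Function.Injective f)
    (hsup : ∀ a b, f (a ⊔ b) = f a ⊔ f b) {a b : α} : f a ≤ f b ↔ a ≤ b := by
  rw [← sup_eq_right, ← sup_eq_right, ← hsup, hf.eq_iff]

section LatticeEmbedding

variable {R M N : Type*} [Semiring R] [Invertible (2 : R)]
  [Lattice M] [AddCommGroup M] [IsOrderedAddMonoid M] [Module R M]
  [Lattice N] [AddCommGroup N] [IsOrderedAddMonoid N] [Module R N]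

theorem LinearMap.map_sup_of_map_abs (J : M →ₗ[R] N) (hJ : ∀ a, J |a| = |J a|) (a b : M) :
    J (a ⊔ b) = J a ⊔ J b := by
  rw [sup_eq_half_smul_add_add_abs_sub R a b, sup_eq_half_smul_add_add_abs_sub R (J a) (J b),
    map_smul, map_add, map_add, hJ, map_sub]

theorem setOf_abs_le_map_eq_image (J : M →ₗ[R] N) (hJinj : Function.Injective J)
    (hJlat : ∀ a, J |a| = |J a|)
    (hJideal : ∀ (u : N) (a : M), |u| ≤ |J a| → u ∈ Set.range J) {x : M} (hx : 0 ≤ x) :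
    {u : N | |u| ≤ J x} = J '' {a : M | |a| ≤ x} := by
  have hle : ∀ a b : M, J a ≤ J b ↔ a ≤ b :=
    fun _ _ => map_le_map_iff_of_injective_of_map_sup hJinj (J.map_sup_of_map_abs hJlat)
  ext u
  constructor
  · intro hu
    have hux : |u| ≤ |J x| := by rwa [← hJlat, abs_of_nonneg hx]
    obtain ⟨a, rfl⟩ := hJideal u x hux
    exact ⟨a, (hle _ _).1 (hJlat a ▸ hu), rfl⟩
  · rintro ⟨a, ha, rfl⟩
    exact (hJlat a ▸ (hle _ _).2 ha : |J a| ≤ J x)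

end LatticeEmbedding

theorem stmt_3_general {E F : Type*}
    [NormedAddCommGroup E] [Lattice E] [IsOrderedAddMonoid E] [NormedSpace ℝ E]
    [NormedAddCommGroup F] [Lattice F] [IsOrderedAddMonoid F] [NormedSpace ℝ F]
    (J : E →L[ℝ] F) (hJinj : Function.Injective J)
    (hJlat : ∀ a : E, J |a| = |J a|)
    (hJideal : ∀ (u : F) (a : E), |u| ≤ |J a| → u ∈ Set.range J)
    (φ : F →L[ℝ] ℝ) :
    ∀ x : E, 0 ≤ x →
      sSup {r : ℝ | ∃ y : F, |y| ≤ J x ∧ φ y = r} =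
        sSup {r : ℝ | ∃ y : E, |y| ≤ x ∧ φ (J y) = r} := by
  intro x hx
  change sSup (φ '' {y : F | |y| ≤ J x}) = sSup ((φ ∘ J) '' {y : E | |y| ≤ x})
  rw [Set.image_comp]
  congr 2
  exact setOf_abs_le_map_eq_image (J : E →ₗ[ℝ] F) hJinj hJlat hJideal hx

/-- Let `E` and `F` be Banach lattices with `E` an ideal in `F` (via the lattice
embedding `J`) with continuous inclusion. For every `φ ∈ F*`, the restriction of `|φ|`
to `E` equals the absolute value, computed in `E*`, of the restriction of `φ` to `E`;
both are expressed via the formula `|φ|(x) = sup {φ y : |y| ≤ x}` on the positive cone. -/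
theorem stmt_3 {E F : Type*}
    [NormedAddCommGroup E] [Lattice E] [HasSolidNorm E] [IsOrderedAddMonoid E] [NormedSpace ℝ E] [CompleteSpace E]
    [NormedAddCommGroup F] [Lattice F] [HasSolidNorm F] [IsOrderedAddMonoid F] [NormedSpace ℝ F] [CompleteSpace F]
    (J : E →L[ℝ] F) (hJinj : Function.Injective J)
    (hJlat : ∀ a : E, J |a| = |J a|)
    (hJideal : ∀ (u : F) (a : E), |u| ≤ |J a| → u ∈ Set.range J)
    (φ : F →L[ℝ] ℝ) :
    ∀ x : E, 0 ≤ x →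
      sSup {r : ℝ | ∃ y : F, |y| ≤ J x ∧ φ y = r} =
        sSup {r : ℝ | ∃ y : E, |y| ≤ x ∧ φ (J y) = r} :=
  stmt_3_general J hJinj hJlat hJideal φ
end

section
/- Let Z be a Banach lattice which is an ideal in a Banach lattice U with continuous inclusion, and let T(·) = φ(·)x be a rank-one operator on U with φ ∈ U*, x ∈ U. Define |T|(·) = |φ|(·)|x|. Then |T| maps Z into itself if and only if T does, and when T(Z) ⊆ Z one has ‖|T|‖_{Z→Z} = ‖T‖_{Z→Z}. -/
/-!
The restriction of `|φ|` to `Z` is the modulus of the restriction of `φ`: by the ideal property,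
the elements `y ∈ U` with `|y| ≤ w ∈ Z` all lie in `Z`. A functional and its modulus have the
same norm, so `φ` and `|φ|` vanish on `Z` together. If `x ∈ Z`, both `T` and `|T|` restrict
to rank-one operators on `Z`, of norms `‖φ|_Z‖ ‖x‖` and `‖|φ|_Z‖ ‖|x|‖`. If `x ∉ Z`, then also
`|x| ∉ Z`, so `T` (resp. `|T|`) maps `Z` into `Z` only if `φ` (resp. `|φ|`) vanishes on `Z`,
and then both restrictions are zero.
-/

open ContinuousLinearMap

/-- `ψ` is the modulus `|φ|` of the functional `φ`, given on the positive cone by the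
Riesz–Kantorovich formula. -/
def IsModulus {E : Type*} [NormedAddCommGroup E] [Lattice E] [NormedSpace ℝ E]
    (φ ψ : E →L[ℝ] ℝ) : Prop :=
  ∀ u : E, 0 ≤ u → ψ u = sSup {r : ℝ | ∃ y : E, |y| ≤ u ∧ φ y = r}

lemma ContinuousLinearMap.apply_le_opNorm_mul_of_abs_le {E : Type*} [NormedAddCommGroup E]
    [Lattice E] [HasSolidNorm E] [NormedSpace ℝ E] (φ : E →L[ℝ] ℝ) {u y : E} (hy : |y| ≤ u) :
    φ y ≤ ‖φ‖ * ‖u‖ :=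
  calc φ y ≤ ‖φ y‖ := Real.le_norm_self _
    _ ≤ ‖φ‖ * ‖y‖ := φ.le_opNorm y
    _ ≤ ‖φ‖ * ‖u‖ := by
      gcongr
      exact norm_le_norm_of_abs_le_abs (hy.trans (le_abs_self u))

namespace IsModulus

variable {E : Type*} [NormedAddCommGroup E] [Lattice E] [IsOrderedAddMonoid E] [HasSolidNorm E]
  [NormedSpace ℝ E] {φ ψ : E →L[ℝ] ℝ}

lemma apply_le (h : IsModulus φ ψ) {u y : E} (hy : |y| ≤ u) : φ y ≤ ψ u := by
  rw [h u ((abs_nonneg y).trans hy)]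
  refine le_csSup ⟨‖φ‖ * ‖u‖, ?_⟩ ⟨y, hy, rfl⟩
  rintro _ ⟨y', hy', rfl⟩
  exact φ.apply_le_opNorm_mul_of_abs_le hy'

lemma le_opNorm_mul (h : IsModulus φ ψ) {u : E} (hu : 0 ≤ u) : ψ u ≤ ‖φ‖ * ‖u‖ := by
  rw [h u hu]
  refine csSup_le ⟨0, 0, by simpa using hu, map_zero φ⟩ ?_
  rintro _ ⟨y, hy, rfl⟩
  exact φ.apply_le_opNorm_mul_of_abs_le hy

lemma monotone (h : IsModulus φ ψ) : Monotone ψ := fun u v huv => by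
  have := h.apply_le (y := 0) (u := v - u) (by simpa using huv)
  rw [map_zero, map_sub] at this
  linarith

lemma abs_apply_le (h : IsModulus φ ψ) (u : E) : |φ u| ≤ ψ |u| := by
  refine abs_le.2 ⟨?_, h.apply_le le_rfl⟩
  have := h.apply_le (y := -u) (u := |u|) (by rw [abs_neg])
  rw [map_neg] at this
  linarith

lemma abs_self_apply_le (h : IsModulus φ ψ) (u : E) : |ψ u| ≤ ψ |u| := by
  refine abs_le.2 ⟨?_, h.monotone (le_abs_self u)⟩
  have := h.monotone (neg_le_abs u)
  rw [map_neg] at this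
  linarith

lemma norm_eq (h : IsModulus φ ψ) : ‖ψ‖ = ‖φ‖ := by
  refine le_antisymm (ψ.opNorm_le_bound (norm_nonneg φ) fun u => ?_)
    (φ.opNorm_le_bound (norm_nonneg ψ) fun u => ?_)
  · calc ‖ψ u‖ = |ψ u| := Real.norm_eq_abs _
      _ ≤ ψ |u| := h.abs_self_apply_le u
      _ ≤ ‖φ‖ * ‖|u|‖ := h.le_opNorm_mul (abs_nonneg u)
      _ = ‖φ‖ * ‖u‖ := by rw [norm_abs_eq_norm]
  · calc ‖φ u‖ = |φ u| := Real.norm_eq_abs _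
      _ ≤ ψ |u| := h.abs_apply_le u
      _ ≤ ‖ψ‖ * ‖|u|‖ := (Real.le_norm_self _).trans (ψ.le_opNorm _)
      _ = ‖ψ‖ * ‖u‖ := by rw [norm_abs_eq_norm]

lemma eq_zero_iff (h : IsModulus φ ψ) : ψ = 0 ↔ φ = 0 := by
  rw [← norm_eq_zero, h.norm_eq, norm_eq_zero]

end IsModulus

section RangeOfEmbedding

variable {Z U : Type*} [NormedAddCommGroup Z] [NormedSpace ℝ Z] [NormedAddCommGroup U]
  [NormedSpace ℝ U] {J : Z →L[ℝ] U}

lemma forall_smul_mem_range_iff (f : Z →L[ℝ] ℝ) (y : U) :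
    (∀ w, f w • y ∈ Set.range J) ↔ y ∈ Set.range J ∨ f = 0 := by
  by_cases hy : y ∈ Set.range J
  · obtain ⟨z, rfl⟩ := hy
    simp only [Set.mem_range_self, true_or, iff_true]
    exact fun w => ⟨f w • z, map_smul J _ _⟩
  · simp only [hy, false_or, ContinuousLinearMap.ext_iff, zero_apply]
    refine forall_congr' fun w => ⟨fun ⟨v, hv⟩ => by_contra fun hf => ?_, fun hf => ?_⟩
    · exact hy ⟨(f w)⁻¹ • v, by rw [map_smul, hv, inv_smul_smul₀ hf]⟩
    · exact ⟨0, by rw [hf, zero_smul, map_zero]⟩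

lemma eq_smulRight_of_map_apply (hJinj : Function.Injective J) {S : Z →L[ℝ] Z} {f : Z →L[ℝ] ℝ}
    {z : Z} (hS : ∀ w, J (S w) = f w • J z) : S = f.smulRight z :=
  ext fun w => hJinj (by rw [hS, smulRight_apply, map_smul])

lemma eq_zero_of_map_apply (hJinj : Function.Injective J) {S : Z →L[ℝ] Z} {f : Z →L[ℝ] ℝ}
    {y : U} (hS : ∀ w, J (S w) = f w • y) (hf : f = 0) : S = 0 :=
  ext fun w => hJinj (by rw [hS, hf, zero_apply, zero_smul, zero_apply, map_zero])

end RangeOfEmbedding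

section LatticeEmbedding

variable {Z U : Type*}
  [NormedAddCommGroup Z] [Lattice Z] [NormedSpace ℝ Z]
  [NormedAddCommGroup U] [Lattice U] [IsOrderedAddMonoid U] [NormedSpace ℝ U]
  {J : Z →L[ℝ] U}

lemma abs_mem_range_iff (hJlat : ∀ w : Z, J |w| = |J w|)
    (hJideal : ∀ (u : U) (w : Z), |u| ≤ |J w| → u ∈ Set.range J) {x : U} :
    |x| ∈ Set.range J ↔ x ∈ Set.range J := by
  constructor
  · rintro ⟨w, hw⟩
    exact hJideal x w (by rw [hw, abs_abs])
  · rintro ⟨z, rfl⟩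
    exact ⟨|z|, hJlat z⟩

variable [IsOrderedAddMonoid Z]

lemma map_le_map_iff_of_map_abs (hJinj : Function.Injective J) (hJlat : ∀ w : Z, J |w| = |J w|)
    {a b : Z} : J a ≤ J b ↔ a ≤ b := by
  rw [← sub_nonneg, ← map_sub, ← sub_nonneg (a := b)]
  constructor
  · intro h
    exact hJinj ((hJlat _).trans (abs_of_nonneg h)) ▸ abs_nonneg _
  · intro h
    rw [← abs_of_nonneg h, hJlat]
    exact abs_nonneg _

lemma IsModulus.comp (hJinj : Function.Injective J) (hJlat : ∀ w : Z, J |w| = |J w|)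
    (hJideal : ∀ (u : U) (w : Z), |u| ≤ |J w| → u ∈ Set.range J) {φ ψ : U →L[ℝ] ℝ}
    (h : IsModulus φ ψ) : IsModulus (φ.comp J) (ψ.comp J) := by
  intro w hw
  have hJw : 0 ≤ J w := by
    rw [← abs_of_nonneg hw, hJlat]
    exact abs_nonneg _
  rw [comp_apply, h _ hJw]
  congr 1
  ext r
  constructor
  · rintro ⟨y, hy, rfl⟩
    obtain ⟨v, rfl⟩ := hJideal y w (hy.trans (le_abs_self _))
    exact ⟨v, by rwa [← map_le_map_iff_of_map_abs hJinj hJlat, hJlat], rfl⟩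
  · rintro ⟨v, hv, rfl⟩
    exact ⟨J v, by rwa [← hJlat, map_le_map_iff_of_map_abs hJinj hJlat], rfl⟩

end LatticeEmbedding

theorem stmt_8_general {Z U : Type*}
    [NormedAddCommGroup Z] [Lattice Z] [IsOrderedAddMonoid Z] [HasSolidNorm Z] [NormedSpace ℝ Z]
    [NormedAddCommGroup U] [Lattice U] [IsOrderedAddMonoid U] [NormedSpace ℝ U]
    (J : Z →L[ℝ] U) (hJinj : Function.Injective J)
    (hJlat : ∀ w : Z, J |w| = |J w|)
    (hJideal : ∀ (u : U) (w : Z), |u| ≤ |J w| → u ∈ Set.range J)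
    (φ ψ : U →L[ℝ] ℝ)
    (hψ : ∀ u : U, 0 ≤ u → ψ u = sSup {r : ℝ | ∃ y : U, |y| ≤ u ∧ φ y = r})
    (x : U) :
    ((∀ w : Z, ψ (J w) • |x| ∈ Set.range J) ↔ (∀ w : Z, φ (J w) • x ∈ Set.range J)) ∧
    (∀ S S' : Z →L[ℝ] Z,
      (∀ w : Z, J (S w) = φ (J w) • x) →
      (∀ w : Z, J (S' w) = ψ (J w) • |x|) →
      ‖S'‖ = ‖S‖) := by
  have hZ : IsModulus (φ.comp J) (ψ.comp J) := IsModulus.comp hJinj hJlat hJideal hψ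
  refine ⟨?_, fun S S' hS hS' => ?_⟩
  · calc (∀ w, ψ (J w) • |x| ∈ Set.range J) ↔ |x| ∈ Set.range J ∨ ψ.comp J = 0 :=
          forall_smul_mem_range_iff (ψ.comp J) |x|
      _ ↔ x ∈ Set.range J ∨ φ.comp J = 0 := by
          rw [abs_mem_range_iff hJlat hJideal, hZ.eq_zero_iff]
      _ ↔ ∀ w, φ (J w) • x ∈ Set.range J := (forall_smul_mem_range_iff (φ.comp J) x).symm
  by_cases hx : x ∈ Set.range J
  · obtain ⟨z, rfl⟩ := hx
    rw [← hJlat] at hS'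
    rw [eq_smulRight_of_map_apply hJinj (f := φ.comp J) hS,
      eq_smulRight_of_map_apply hJinj (f := ψ.comp J) hS', norm_smulRight_apply,
      norm_smulRight_apply, hZ.norm_eq, norm_abs_eq_norm]
  · have hφ : φ.comp J = 0 :=
      ((forall_smul_mem_range_iff (φ.comp J) x).1 fun w => ⟨S w, hS w⟩).resolve_left hx
    rw [eq_zero_of_map_apply hJinj (f := φ.comp J) hS hφ,
      eq_zero_of_map_apply hJinj (f := ψ.comp J) hS' (hZ.eq_zero_iff.2 hφ)]

/-- Let `Z` be a Banach lattice, an ideal in a Banach lattice `U` (via the lattice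
embedding `J`, with continuous inclusion), and `T = φ(·)x` a rank-one operator on `U`;
set `|T| = |φ|(·)|x|` (with `ψ = |φ|` characterized by the sup formula).  Then `|T|`
maps `Z` into itself iff `T` does, and when `T(Z) ⊆ Z` the restrictions satisfy
`‖|T|‖_{Z→Z} = ‖T‖_{Z→Z}`. -/
theorem stmt_8 {Z U : Type*}
    [NormedAddCommGroup Z] [Lattice Z] [IsOrderedAddMonoid Z] [HasSolidNorm Z] [NormedSpace ℝ Z] [CompleteSpace Z]
    [NormedAddCommGroup U] [Lattice U] [IsOrderedAddMonoid U] [HasSolidNorm U] [NormedSpace ℝ U] [CompleteSpace U]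
    (J : Z →L[ℝ] U) (hJinj : Function.Injective J)
    (hJlat : ∀ w : Z, J |w| = |J w|)
    (hJideal : ∀ (u : U) (w : Z), |u| ≤ |J w| → u ∈ Set.range J)
    (φ ψ : U →L[ℝ] ℝ)
    (hψ : ∀ u : U, 0 ≤ u → ψ u = sSup {r : ℝ | ∃ y : U, |y| ≤ u ∧ φ y = r})
    (x : U) :
    ((∀ w : Z, ψ (J w) • |x| ∈ Set.range J) ↔ (∀ w : Z, φ (J w) • x ∈ Set.range J)) ∧
    (∀ S S' : Z →L[ℝ] Z,
      (∀ w : Z, J (S w) = φ (J w) • x) →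
      (∀ w : Z, J (S' w) = ψ (J w) • |x|) →
      ‖S'‖ = ‖S‖) :=
  stmt_8_general J hJinj hJlat hJideal φ ψ hψ x
end

section
/- Let (X,Y) be an interpolation pair of Banach lattices and c ≥ 1. Then every intermediate Banach lattice Z with the interpolation property with constant c for positive operators also has the interpolation property with constant c for rank-one operators: P-Int_c(X,Y) ⊆ R1-Int_c(X,Y). -/
/-!
For a rank-one operator `T = φ(·) x` the operator `|T| = |φ|(·) |x|`, built from the
Riesz–Kantorovich modulus `|φ| w = sup {φ v | |v| ≤ w}`, is positive and dominates `T`: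
`|T w| ≤ |T| |w|`. On `X` (and likewise on `Y`) it is again rank-one with `‖|T|‖ ≤ ‖T‖`,
because `|φ| |a|` is a supremum of values `φ b` over `|b| ≤ |a|` and `X` is an ideal with a
solid norm. Applying the hypothesis to `|T|` gives `|T| Z ⊆ Z` and
`‖|T|‖_Z ≤ c max (‖T‖_X, ‖T‖_Y)`, and since `Z` is an ideal with a solid norm the domination
passes invariance and the bound on to `T`.
-/

open Filter Topology

section SMulOrder

variable {E : Type*} [NormedAddCommGroup E] [Lattice E] [IsOrderedAddMonoid E] [HasSolidNorm E]
  [NormedSpace ℝ E]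

/-- Dyadic rationals `k / 2 ^ n` act positively because the lattice group is 2-semiclosed, and
every `r ≥ 0` is a limit of such rationals; the positive cone is closed. -/
theorem HasSolidNorm.smul_nonneg {r : ℝ} (hr : 0 ≤ r) {u : E} (hu : 0 ≤ u) : 0 ≤ r • u := by
  have inv_two_pow : ∀ n : ℕ, 0 ≤ ((2 : ℝ) ^ n)⁻¹ • u := by
    intro n
    induction n with
    | zero => simpa using hu
    | succ n ih =>
      refine nsmul_two_semiclosed ?_
      rwa [two_nsmul, ← add_smul, pow_succ, mul_inv, ← mul_two, mul_assoc,
        inv_mul_cancel₀ two_ne_zero, mul_one]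
  have dyadic : ∀ n : ℕ, 0 ≤ ((⌊r * 2 ^ n⌋₊ : ℝ) / 2 ^ n) • u := fun n => by
    rw [div_eq_mul_inv, ← smul_smul, Nat.cast_smul_eq_nsmul]
    exact nsmul_nonneg (inv_two_pow n) _
  have approx : Tendsto (fun n : ℕ => (⌊r * 2 ^ n⌋₊ : ℝ) / 2 ^ n) atTop (𝓝 r) :=
    (tendsto_nat_floor_mul_div_atTop hr).comp
      (tendsto_pow_atTop_atTop_of_one_lt one_lt_two)
  exact isClosed_nonneg.mem_of_tendsto (approx.smul_const u) (Eventually.of_forall dyadic)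

instance HasSolidNorm.posSMulMono : PosSMulMono ℝ E :=
  PosSMulMono.of_smul_nonneg fun _ hr _ hu => HasSolidNorm.smul_nonneg hr hu

theorem abs_smul_le_abs_smul_abs (r : ℝ) (u : E) : |r • u| ≤ |r| • |u| := by
  rcases le_total 0 r with hr | hr
  · rw [abs_of_nonneg hr, abs_le']
    refine ⟨smul_le_smul_of_nonneg_left (le_abs_self u) hr, ?_⟩
    rw [← smul_neg]
    exact smul_le_smul_of_nonneg_left (neg_le_abs u) hr
  · rw [abs_of_nonpos hr, abs_le']
    refine ⟨?_, ?_⟩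
    · rw [← neg_smul_neg]
      exact smul_le_smul_of_nonneg_left (neg_le_abs u) (neg_nonneg.2 hr)
    · rw [← neg_smul]
      exact smul_le_smul_of_nonneg_left (le_abs_self u) (neg_nonneg.2 hr)

end SMulOrder

theorem exists_add_eq_of_abs_le_add {E : Type*} [AddCommGroup E] [Lattice E] [IsOrderedAddMonoid E]
    {v u w : E} (hu : 0 ≤ u) (hw : 0 ≤ w) (hv : |v| ≤ u + w) :
    ∃ v₁ v₂ : E, v₁ + v₂ = v ∧ |v₁| ≤ u ∧ |v₂| ≤ w := by
  have hvu : v ≤ u + w := (le_abs_self v).trans hv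
  have hnvu : -v ≤ u + w := (neg_le_abs v).trans hv
  refine ⟨v ⊓ u ⊔ -u, v - (v ⊓ u ⊔ -u), add_sub_cancel _ _, ?_, ?_⟩
  · exact abs_le'.2 ⟨sup_le inf_le_right (neg_le_self hu), neg_le.1 le_sup_right⟩
  · refine abs_le'.2 ⟨?_, ?_⟩
    · rw [sub_le_comm]
      exact le_sup_of_le_left (le_inf (sub_le_self v hw) (sub_le_iff_le_add.2 hvu))
    · rw [neg_sub, sub_le_iff_le_add]
      refine sup_le (inf_le_left.trans (le_add_of_nonneg_left hw)) ?_
      calc -u = -(u + w) + w := by abel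
        _ ≤ v + w := add_le_add_left (neg_le.1 hnvu) w
        _ = w + v := add_comm _ _

namespace ContinuousLinearMap

open scoped Pointwise

variable {E : Type*} [NormedAddCommGroup E] [Lattice E] [IsOrderedAddMonoid E] [HasSolidNorm E]
  [NormedSpace ℝ E] (φ : E →L[ℝ] ℝ)

/-- The Riesz–Kantorovich formula `|φ|(w) = sup {φ v | |v| ≤ w}`, meaningful for `0 ≤ w`. -/
noncomputable def modulusNonneg (w : E) : ℝ := sSup (φ '' {v | |v| ≤ w})

variable {φ}

theorem apply_le_norm_mul_of_abs_le {v w : E} (hv : |v| ≤ w) : φ v ≤ ‖φ‖ * ‖w‖ :=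
  calc φ v ≤ ‖φ‖ * ‖v‖ := (le_abs_self _).trans (φ.le_opNorm v)
    _ ≤ ‖φ‖ * ‖w‖ := by
      gcongr
      exact norm_le_norm_of_abs_le_abs (by rwa [abs_of_nonneg ((abs_nonneg v).trans hv)])

theorem bddAbove_image_abs_le (w : E) : BddAbove (φ '' {v | |v| ≤ w}) := by
  refine ⟨‖φ‖ * ‖w‖, ?_⟩
  rintro _ ⟨v, hv, rfl⟩
  exact apply_le_norm_mul_of_abs_le hv

omit [HasSolidNorm E] in
theorem zero_mem_image_abs_le {w : E} (hw : 0 ≤ w) : (0 : ℝ) ∈ φ '' {v | |v| ≤ w} :=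
  ⟨0, by simpa using hw, map_zero φ⟩

theorem le_modulusNonneg {v w : E} (hv : |v| ≤ w) : φ v ≤ φ.modulusNonneg w :=
  le_csSup (bddAbove_image_abs_le w) ⟨v, hv, rfl⟩

theorem abs_le_modulusNonneg {v w : E} (hv : |v| ≤ w) : |φ v| ≤ φ.modulusNonneg w :=
  abs_le'.2 ⟨le_modulusNonneg hv, by simpa using le_modulusNonneg (v := -v) (by rwa [abs_neg])⟩

theorem modulusNonneg_nonneg {w : E} (hw : 0 ≤ w) : 0 ≤ φ.modulusNonneg w := by
  simpa using le_modulusNonneg (φ := φ) (v := 0) (by simpa using hw)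

omit [HasSolidNorm E] in
theorem modulusNonneg_le_of_forall {w : E} (hw : 0 ≤ w) {C : ℝ} (h : ∀ v, |v| ≤ w → φ v ≤ C) :
    φ.modulusNonneg w ≤ C :=
  csSup_le ⟨0, zero_mem_image_abs_le hw⟩ (by rintro _ ⟨v, hv, rfl⟩; exact h v hv)

theorem modulusNonneg_mono {w w' : E} (hw : 0 ≤ w) (h : w ≤ w') :
    φ.modulusNonneg w ≤ φ.modulusNonneg w' :=
  modulusNonneg_le_of_forall hw fun _ hv => le_modulusNonneg (hv.trans h)

theorem modulusNonneg_zero : φ.modulusNonneg 0 = 0 := by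
  refine le_antisymm (modulusNonneg_le_of_forall le_rfl fun v hv => ?_)
    (modulusNonneg_nonneg le_rfl)
  have hv0 : v = 0 :=
    le_antisymm ((le_abs_self v).trans hv) (neg_nonpos.1 ((neg_le_abs v).trans hv))
  rw [hv0, map_zero]

omit [IsOrderedAddMonoid E] [HasSolidNorm E] in
theorem modulusNonneg_smul {t : ℝ} (ht : 0 ≤ t) (w : E) :
    (t • φ).modulusNonneg w = t * φ.modulusNonneg w := by
  rw [modulusNonneg, modulusNonneg, ← smul_eq_mul, ← Real.sSup_smul_of_nonneg ht, ← Set.image_smul,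
    Set.image_image]
  rfl

theorem modulusNonneg_le_norm_mul {w : E} (hw : 0 ≤ w) : φ.modulusNonneg w ≤ ‖φ‖ * ‖w‖ :=
  modulusNonneg_le_of_forall hw fun _ => apply_le_norm_mul_of_abs_le

theorem modulusNonneg_add {u w : E} (hu : 0 ≤ u) (hw : 0 ≤ w) :
    φ.modulusNonneg (u + w) = φ.modulusNonneg u + φ.modulusNonneg w := by
  have hsplit : φ '' {v | |v| ≤ u + w} = φ '' {v | |v| ≤ u} + φ '' {v | |v| ≤ w} := by
    ext t
    simp only [Set.mem_add, Set.mem_image]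
    constructor
    · rintro ⟨v, hv, rfl⟩
      obtain ⟨v₁, v₂, rfl, h₁, h₂⟩ := exists_add_eq_of_abs_le_add hu hw hv
      exact ⟨_, ⟨v₁, h₁, rfl⟩, _, ⟨v₂, h₂, rfl⟩, (map_add φ v₁ v₂).symm⟩
    · rintro ⟨_, ⟨v₁, h₁, rfl⟩, _, ⟨v₂, h₂, rfl⟩, rfl⟩
      exact ⟨v₁ + v₂, (abs_add_le v₁ v₂).trans (add_le_add h₁ h₂), map_add φ v₁ v₂⟩
  rw [modulusNonneg, hsplit]
  exact csSup_add ⟨0, zero_mem_image_abs_le hu⟩ (bddAbove_image_abs_le u)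
    ⟨0, zero_mem_image_abs_le hw⟩ (bddAbove_image_abs_le w)

theorem modulusNonneg_sub_modulusNonneg_add (u v : E) :
    φ.modulusNonneg (u + v)⁺ - φ.modulusNonneg (u + v)⁻ =
      (φ.modulusNonneg u⁺ - φ.modulusNonneg u⁻) + (φ.modulusNonneg v⁺ - φ.modulusNonneg v⁻) := by
  have key : (u + v)⁺ + (u⁻ + v⁻) = (u⁺ + v⁺) + (u + v)⁻ := by
    rw [← sub_eq_sub_iff_add_eq_add, posPart_sub_negPart, add_sub_add_comm, posPart_sub_negPart,
      posPart_sub_negPart]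
  have := congrArg φ.modulusNonneg key
  rw [modulusNonneg_add (posPart_nonneg _) (add_nonneg (negPart_nonneg u) (negPart_nonneg v)),
    modulusNonneg_add (add_nonneg (posPart_nonneg u) (posPart_nonneg v)) (negPart_nonneg _),
    modulusNonneg_add (negPart_nonneg u) (negPart_nonneg v),
    modulusNonneg_add (posPart_nonneg u) (posPart_nonneg v)] at this
  linarith

theorem abs_modulusNonneg_sub_modulusNonneg_le (u : E) :
    |φ.modulusNonneg u⁺ - φ.modulusNonneg u⁻| ≤ φ.modulusNonneg |u| := by
  have hpos : u⁺ ≤ |u| := posPart_add_negPart u ▸ le_add_of_nonneg_right (negPart_nonneg u)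
  have hneg : u⁻ ≤ |u| := posPart_add_negPart u ▸ le_add_of_nonneg_left (posPart_nonneg u)
  have := modulusNonneg_mono (φ := φ) (posPart_nonneg u) hpos
  have := modulusNonneg_mono (φ := φ) (negPart_nonneg u) hneg
  have := modulusNonneg_nonneg (φ := φ) (posPart_nonneg u)
  have := modulusNonneg_nonneg (φ := φ) (negPart_nonneg u)
  rw [abs_le]
  constructor <;> linarith

variable (φ) in
noncomputable def modulus : E →L[ℝ] ℝ :=
  (AddMonoidHom.mk' (fun u => φ.modulusNonneg u⁺ - φ.modulusNonneg u⁻)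
    modulusNonneg_sub_modulusNonneg_add).toRealLinearMap <|
    AddMonoidHomClass.continuous_of_bound _ ‖φ‖ fun u =>
      (abs_modulusNonneg_sub_modulusNonneg_le u).trans <|
        (modulusNonneg_le_norm_mul (abs_nonneg u)).trans_eq (by rw [norm_abs_eq_norm])

theorem modulus_apply (u : E) :
    φ.modulus u = φ.modulusNonneg u⁺ - φ.modulusNonneg u⁻ :=
  rfl

theorem modulus_apply_of_nonneg {w : E} (hw : 0 ≤ w) : φ.modulus w = φ.modulusNonneg w := by
  rw [modulus_apply, posPart_eq_self.2 hw, negPart_eq_zero.2 hw, modulusNonneg_zero, sub_zero]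

theorem modulus_nonneg {w : E} (hw : 0 ≤ w) : 0 ≤ φ.modulus w :=
  modulus_apply_of_nonneg hw ▸ modulusNonneg_nonneg hw

theorem abs_modulus_le (u : E) : |φ.modulus u| ≤ φ.modulusNonneg |u| :=
  abs_modulusNonneg_sub_modulusNonneg_le u

theorem abs_apply_le_modulus_abs (u : E) : |φ u| ≤ φ.modulus |u| :=
  modulus_apply_of_nonneg (abs_nonneg u) ▸ abs_le_modulusNonneg le_rfl

variable (φ) in
theorem abs_smul_le_modulus_smul (u x : E) : |φ u • x| ≤ φ.modulus |u| • |x| :=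
  (abs_smul_le_abs_smul_abs _ x).trans
    (smul_le_smul_of_nonneg_right (φ.abs_apply_le_modulus_abs u) (abs_nonneg x))

theorem opNorm_le_of_abs_apply_le {F : Type*} [NormedAddCommGroup F] [Lattice F]
    [IsOrderedAddMonoid F] [HasSolidNorm F] [NormedSpace ℝ F] {S R : E →L[ℝ] F}
    (h : ∀ w, |S w| ≤ R |w|) : ‖S‖ ≤ ‖R‖ :=
  S.opNorm_le_bound (norm_nonneg R) fun w =>
    calc ‖S w‖ ≤ ‖R |w|‖ := norm_le_norm_of_abs_le_abs ((h w).trans (le_abs_self _))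
      _ ≤ ‖R‖ * ‖w‖ := (R.le_opNorm _).trans_eq (by rw [norm_abs_eq_norm])

end ContinuousLinearMap

theorem exists_lift_smulRight {V U : Type*} [NormedAddCommGroup V] [NormedSpace ℝ V]
    [NormedAddCommGroup U] [NormedSpace ℝ U] {J : V →L[ℝ] U} (ψ : U →L[ℝ] ℝ) (y : U)
    (h : ∀ v, ∃ v', J v' = ψ (J v) • y) :
    ∃ R : V →L[ℝ] V, ∀ v, J (R v) = ψ (J v) • y := by
  by_cases hψ : ∀ v, ψ (J v) = 0
  · exact ⟨0, fun v => by simp [hψ v]⟩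
  obtain ⟨v₀, hv₀⟩ := not_forall.1 hψ
  obtain ⟨w₀, hw₀⟩ := h v₀
  -- `y` itself lies in the range of `J`: it is `J ((ψ (J v₀))⁻¹ • w₀)`
  refine ⟨(ψ.comp J).smulRight ((ψ (J v₀))⁻¹ • w₀), fun v => ?_⟩
  simp [hw₀, smul_smul, inv_mul_cancel_right₀ hv₀]

section IdealEmbedding

variable {X U : Type*} [NormedAddCommGroup X] [Lattice X] [NormedSpace ℝ X]
  [NormedAddCommGroup U] [Lattice U] [NormedSpace ℝ U]

structure IsIdealEmbedding (J : X →L[ℝ] U) : Prop where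
  injective : Function.Injective J
  map_abs : ∀ a, J |a| = |J a|
  mem_range_of_abs_le : ∀ (u : U) (a : X), |u| ≤ |J a| → u ∈ Set.range J

namespace IsIdealEmbedding

variable [IsOrderedAddMonoid X] [IsOrderedAddMonoid U] {J : X →L[ℝ] U}

theorem map_nonneg (hJ : IsIdealEmbedding J) {a : X} (ha : 0 ≤ a) : 0 ≤ J a := by
  rw [← abs_of_nonneg ha, hJ.map_abs]
  exact abs_nonneg _

theorem map_le_map_iff (hJ : IsIdealEmbedding J) {a b : X} : J a ≤ J b ↔ a ≤ b := by
  refine ⟨fun h => ?_, fun h => sub_nonneg.1 (map_sub J b a ▸ hJ.map_nonneg (sub_nonneg.2 h))⟩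
  have : |b - a| = b - a :=
    hJ.injective (by rw [hJ.map_abs, map_sub, abs_of_nonneg (sub_nonneg.2 h)])
  exact sub_nonneg.1 (this ▸ abs_nonneg _)

theorem map_nonneg_iff (hJ : IsIdealEmbedding J) {a : X} : 0 ≤ J a ↔ 0 ≤ a := by
  simpa using hJ.map_le_map_iff (a := 0) (b := a)

theorem nonneg_of_map_eq_modulus_smul [HasSolidNorm U] (hJ : IsIdealEmbedding J)
    (φ : U →L[ℝ] ℝ) (x : U) {a a' : X} (ha : 0 ≤ a) (h : J a' = φ.modulus (J a) • |x|) : 0 ≤ a' :=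
  hJ.map_nonneg_iff.1 <| h ▸ smul_nonneg (φ.modulus_nonneg (hJ.map_nonneg ha)) (abs_nonneg x)

variable [HasSolidNorm X]

theorem modulusNonneg_abs_le (hJ : IsIdealEmbedding J) (φ : U →L[ℝ] ℝ) {a : X} {C : ℝ}
    (h : ∀ b, ‖b‖ ≤ ‖a‖ → φ (J b) ≤ C) : φ.modulusNonneg |J a| ≤ C := by
  refine φ.modulusNonneg_le_of_forall (abs_nonneg _) fun v hv => ?_
  obtain ⟨b, rfl⟩ := hJ.mem_range_of_abs_le v a hv
  refine h b (norm_le_norm_of_abs_le_abs ?_)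
  rwa [← hJ.map_le_map_iff, hJ.map_abs, hJ.map_abs]

variable [HasSolidNorm U]

theorem exists_modulus_lift (hJ : IsIdealEmbedding J) (φ : U →L[ℝ] ℝ) (x : U) (S : X →L[ℝ] X)
    (hS : ∀ a, J (S a) = φ (J a) • x) :
    ∃ R : X →L[ℝ] X, (∀ a, J (R a) = φ.modulus (J a) • |x|) ∧ ‖R‖ ≤ ‖S‖ := by
  by_cases hx : x ∈ Set.range J
  · obtain ⟨x', rfl⟩ := hx
    refine ⟨(φ.modulus.comp J).smulRight |x'|, fun a => by simp [hJ.map_abs], ?_⟩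
    have norm_S : ∀ b, ‖S b‖ = |φ (J b)| * ‖x'‖ := fun b => by
      rw [hJ.injective (by rw [hS, map_smul] : J (S b) = J (φ (J b) • x')), norm_smul,
        Real.norm_eq_abs]
    refine ContinuousLinearMap.opNorm_le_bound _ (norm_nonneg S) fun a => ?_
    calc ‖φ.modulus (J a) • |x'|‖ = |φ.modulus (J a)| * ‖x'‖ := by
          rw [norm_smul, Real.norm_eq_abs, norm_abs_eq_norm]
      _ ≤ φ.modulusNonneg |J a| * ‖x'‖ := by gcongr; exact φ.abs_modulus_le _
      _ = (‖x'‖ • φ).modulusNonneg |J a| := by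
          rw [φ.modulusNonneg_smul (norm_nonneg _), mul_comm]
      _ ≤ ‖S‖ * ‖a‖ := hJ.modulusNonneg_abs_le _ fun b hb =>
        calc (‖x'‖ • φ) (J b) ≤ |φ (J b)| * ‖x'‖ := by
              rw [smul_apply, smul_eq_mul, mul_comm]
              gcongr
              exact le_abs_self _
          _ = ‖S b‖ := (norm_S b).symm
          _ ≤ ‖S‖ * ‖a‖ := (S.le_opNorm b).trans (by gcongr)
  · have hφ : ∀ a, φ (J a) = 0 := fun a => by
      by_contra h
      exact hx ⟨(φ (J a))⁻¹ • S a, by rw [map_smul, hS, smul_smul, inv_mul_cancel₀ h, one_smul]⟩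
    refine ⟨0, fun a => ?_, by simp⟩
    have : φ.modulus (J a) = 0 := abs_nonpos_iff.1 <|
      (φ.abs_modulus_le _).trans (hJ.modulusNonneg_abs_le φ fun b _ => (hφ b).le)
    simp [this]

end IsIdealEmbedding

end IdealEmbedding

theorem stmt_9_general {U X Y Z : Type*}
    [NormedAddCommGroup U] [Lattice U] [IsOrderedAddMonoid U] [HasSolidNorm U] [NormedSpace ℝ U]
    [NormedAddCommGroup X] [Lattice X] [IsOrderedAddMonoid X] [HasSolidNorm X] [NormedSpace ℝ X]
    [NormedAddCommGroup Y] [Lattice Y] [IsOrderedAddMonoid Y] [HasSolidNorm Y] [NormedSpace ℝ Y]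
    [NormedAddCommGroup Z] [Lattice Z] [IsOrderedAddMonoid Z] [HasSolidNorm Z] [NormedSpace ℝ Z]
    (JX : X →L[ℝ] U) (JY : Y →L[ℝ] U) (JZ : Z →L[ℝ] U)
    (hJXinj : Function.Injective JX) (hJYinj : Function.Injective JY)
    (hJZinj : Function.Injective JZ)
    (hJXlat : ∀ a : X, JX |a| = |JX a|) (hJYlat : ∀ b : Y, JY |b| = |JY b|)
    (hJZlat : ∀ w : Z, JZ |w| = |JZ w|)
    (hJXideal : ∀ (u : U) (a : X), |u| ≤ |JX a| → u ∈ Set.range JX)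
    (hJYideal : ∀ (u : U) (b : Y), |u| ≤ |JY b| → u ∈ Set.range JY)
    (hJZideal : ∀ (u : U) (w : Z), |u| ≤ |JZ w| → u ∈ Set.range JZ)
    (c : ℝ) (hc : 1 ≤ c)
    (hP : ∀ T : U →ₗ[ℝ] U,
      (∀ a : X, ∃ a' : X, JX a' = T (JX a)) →
      (∀ a : X, 0 ≤ a → ∀ a' : X, JX a' = T (JX a) → 0 ≤ a') →
      (∀ b : Y, ∃ b' : Y, JY b' = T (JY b)) →
      (∀ b : Y, 0 ≤ b → ∀ b' : Y, JY b' = T (JY b) → 0 ≤ b') →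
      (∀ w : Z, ∃ w' : Z, JZ w' = T (JZ w)) ∧
      ∀ (SZ : Z →L[ℝ] Z) (SX : X →L[ℝ] X) (SY : Y →L[ℝ] Y),
        (∀ w : Z, JZ (SZ w) = T (JZ w)) →
        (∀ a : X, JX (SX a) = T (JX a)) →
        (∀ b : Y, JY (SY b) = T (JY b)) →
        ‖SZ‖ ≤ c * max ‖SX‖ ‖SY‖) :
    ∀ (φ : U →L[ℝ] ℝ) (x : U),
      (∃ SX : X →L[ℝ] X, ∀ a : X, JX (SX a) = φ (JX a) • x) →
      (∃ SY : Y →L[ℝ] Y, ∀ b : Y, JY (SY b) = φ (JY b) • x) →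
      (∀ w : Z, ∃ w' : Z, JZ w' = φ (JZ w) • x) ∧
      ∀ (SZ : Z →L[ℝ] Z) (SX : X →L[ℝ] X) (SY : Y →L[ℝ] Y),
        (∀ w : Z, JZ (SZ w) = φ (JZ w) • x) →
        (∀ a : X, JX (SX a) = φ (JX a) • x) →
        (∀ b : Y, JY (SY b) = φ (JY b) • x) →
        ‖SZ‖ ≤ c * max ‖SX‖ ‖SY‖ := by
  intro φ x ⟨SX₀, hSX₀⟩ ⟨SY₀, hSY₀⟩
  have hX : IsIdealEmbedding JX := ⟨hJXinj, hJXlat, hJXideal⟩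
  have hY : IsIdealEmbedding JY := ⟨hJYinj, hJYlat, hJYideal⟩
  have hZ : IsIdealEmbedding JZ := ⟨hJZinj, hJZlat, hJZideal⟩
  obtain ⟨RX₀, hRX₀, -⟩ := hX.exists_modulus_lift φ x SX₀ hSX₀
  obtain ⟨RY₀, hRY₀, -⟩ := hY.exists_modulus_lift φ x SY₀ hSY₀
  obtain ⟨hTZ, hT⟩ := hP (φ.modulus.smulRight |x|) (fun a => ⟨RX₀ a, hRX₀ a⟩)
    (fun _ ha _ => hX.nonneg_of_map_eq_modulus_smul φ x ha) (fun b => ⟨RY₀ b, hRY₀ b⟩)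
    (fun _ hb _ => hY.nonneg_of_map_eq_modulus_smul φ x hb)
  obtain ⟨RZ, hRZ⟩ := exists_lift_smulRight φ.modulus |x| hTZ
  have hdom : ∀ w, |φ (JZ w) • x| ≤ JZ (RZ |w|) := fun w => by
    rw [hRZ, hJZlat]
    exact φ.abs_smul_le_modulus_smul _ _
  refine ⟨fun w => hJZideal _ (RZ |w|) ((hdom w).trans (le_abs_self _)),
    fun SZ SX SY hSZ hSX hSY => ?_⟩
  obtain ⟨RX, hRX, hRXSX⟩ := hX.exists_modulus_lift φ x SX hSX
  obtain ⟨RY, hRY, hRYSY⟩ := hY.exists_modulus_lift φ x SY hSY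
  calc ‖SZ‖ ≤ ‖RZ‖ := SZ.opNorm_le_of_abs_apply_le fun w => by
        rw [← hZ.map_le_map_iff, hJZlat, hSZ]
        exact hdom w
    _ ≤ c * max ‖RX‖ ‖RY‖ := hT RZ RX RY hRZ hRX hRY
    _ ≤ c * max ‖SX‖ ‖SY‖ :=
      mul_le_mul_of_nonneg_left (max_le_max hRXSX hRYSY) (zero_le_one.trans hc)

/-- Let `(X,Y)` be an interpolation pair of Banach lattices (modelled via lattice
embeddings `JX`, `JY` with ideal ranges into the Banach lattice `U = X+Y`, which they
span) and let `Z` be an intermediate Banach lattice (`X∩Y ↪ Z ↪ X+Y`, continuous ideal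
inclusions).  If `Z` has the interpolation property with constant `c ≥ 1` for all
operators `T` on `X+Y` with positive restrictions to `X` and `Y` (i.e. `Z ∈ P-Int_c`),
then `Z` has the interpolation property with constant `c` for all rank-one operators
`T = φ(·)x` mapping `X` into `X` and `Y` into `Y` continuously (i.e. `Z ∈ R1-Int_c`). -/
theorem stmt_9 {U X Y Z : Type*}
    [NormedAddCommGroup U] [Lattice U] [IsOrderedAddMonoid U] [HasSolidNorm U] [NormedSpace ℝ U] [CompleteSpace U]
    [NormedAddCommGroup X] [Lattice X] [IsOrderedAddMonoid X] [HasSolidNorm X] [NormedSpace ℝ X] [CompleteSpace X]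
    [NormedAddCommGroup Y] [Lattice Y] [IsOrderedAddMonoid Y] [HasSolidNorm Y] [NormedSpace ℝ Y] [CompleteSpace Y]
    [NormedAddCommGroup Z] [Lattice Z] [IsOrderedAddMonoid Z] [HasSolidNorm Z] [NormedSpace ℝ Z] [CompleteSpace Z]
    (JX : X →L[ℝ] U) (JY : Y →L[ℝ] U) (JZ : Z →L[ℝ] U)
    (hJXinj : Function.Injective JX) (hJYinj : Function.Injective JY)
    (hJZinj : Function.Injective JZ)
    (hJXlat : ∀ a : X, JX |a| = |JX a|) (hJYlat : ∀ b : Y, JY |b| = |JY b|)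
    (hJZlat : ∀ w : Z, JZ |w| = |JZ w|)
    (hJXideal : ∀ (u : U) (a : X), |u| ≤ |JX a| → u ∈ Set.range JX)
    (hJYideal : ∀ (u : U) (b : Y), |u| ≤ |JY b| → u ∈ Set.range JY)
    (hJZideal : ∀ (u : U) (w : Z), |u| ≤ |JZ w| → u ∈ Set.range JZ)
    (hsum : ∀ u : U, ∃ (a : X) (b : Y), u = JX a + JY b)
    (hinter : ∃ C : ℝ, 0 < C ∧ ∀ (a : X) (b : Y) (w : Z),
      JX a = JY b → JZ w = JX a → ‖w‖ ≤ C * max ‖a‖ ‖b‖)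
    (c : ℝ) (hc : 1 ≤ c)
    (hP : ∀ T : U →ₗ[ℝ] U,
      (∀ a : X, ∃ a' : X, JX a' = T (JX a)) →
      (∀ a : X, 0 ≤ a → ∀ a' : X, JX a' = T (JX a) → 0 ≤ a') →
      (∀ b : Y, ∃ b' : Y, JY b' = T (JY b)) →
      (∀ b : Y, 0 ≤ b → ∀ b' : Y, JY b' = T (JY b) → 0 ≤ b') →
      (∀ w : Z, ∃ w' : Z, JZ w' = T (JZ w)) ∧
      ∀ (SZ : Z →L[ℝ] Z) (SX : X →L[ℝ] X) (SY : Y →L[ℝ] Y),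
        (∀ w : Z, JZ (SZ w) = T (JZ w)) →
        (∀ a : X, JX (SX a) = T (JX a)) →
        (∀ b : Y, JY (SY b) = T (JY b)) →
        ‖SZ‖ ≤ c * max ‖SX‖ ‖SY‖) :
    ∀ (φ : U →L[ℝ] ℝ) (x : U),
      (∃ SX : X →L[ℝ] X, ∀ a : X, JX (SX a) = φ (JX a) • x) →
      (∃ SY : Y →L[ℝ] Y, ∀ b : Y, JY (SY b) = φ (JY b) • x) →
      (∀ w : Z, ∃ w' : Z, JZ w' = φ (JZ w) • x) ∧
      ∀ (SZ : Z →L[ℝ] Z) (SX : X →L[ℝ] X) (SY : Y →L[ℝ] Y),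
        (∀ w : Z, JZ (SZ w) = φ (JZ w) • x) →
        (∀ a : X, JX (SX a) = φ (JX a) • x) →
        (∀ b : Y, JY (SY b) = φ (JY b) • x) →
        ‖SZ‖ ≤ c * max ‖SX‖ ‖SY‖ :=
  stmt_9_general JX JY JZ hJXinj hJYinj hJZinj hJXlat hJYlat hJZlat hJXideal hJYideal hJZideal c hc
    hP
end
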